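/- Let f : [0,∞) → [0,∞) be a decreasing (not necessarily strictly) function and X a Borel subset of ℝ. Suppose there exist q ∈ [0,1] and δ > 0 such that ℓ([0,r] ∩ X) ≥ r·q for all 0 < r ≤ δ. Then ∫_{X ∩ [0,δ]} f(x) dx ≥ q · ∫_{[0,δ]} f(x) dx. -/

import Mathlib

/-!
By the layer-cake formula both integrals are integrals over `t > 0` of the measures of the
superlevel sets `{t < f}`. Since `f` is decreasing, such a superlevel set inside `[0, δ]` is an
initial segment `[0, s)` or `[0, s]` with `s ≤ δ`, and on initial segments the density hypothesis
says precisely that `X` occupies at least the proportion `q`.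
-/

open MeasureTheory Set

lemma Real.Ico_sSup_subset_of_Icc_subset {S : Set ℝ} (hS : ∀ x ∈ S, Icc 0 x ⊆ S) :
    Ico 0 (sSup S) ⊆ S := by
  intro y ⟨hy0, hys⟩
  rcases S.eq_empty_or_nonempty with rfl | hne
  · rw [Real.sSup_empty] at hys
    exact absurd hy0 hys.not_ge
  obtain ⟨x, hxS, hyx⟩ := exists_lt_of_lt_csSup hne hys
  exact hS x hxS ⟨hy0, hyx.le⟩

lemma ofReal_mul_volume_le_volume_inter_of_Icc_subset {X S : Set ℝ} {q δ : ℝ} (hq : 0 ≤ q)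
    (h : ∀ r : ℝ, 0 < r → r ≤ δ → r * q ≤ (volume (Icc 0 r ∩ X)).toReal)
    (hSδ : S ⊆ Icc 0 δ) (hS : ∀ x ∈ S, Icc 0 x ⊆ S) :
    ENNReal.ofReal q * volume S ≤ volume (S ∩ X) := by
  set s := sSup S
  have hs0 : 0 ≤ s := Real.sSup_nonneg fun x hx => (hSδ hx).1
  have hIco : Ico 0 s ⊆ S := Real.Ico_sSup_subset_of_Icc_subset hS
  have hvol : volume S ≤ ENNReal.ofReal s := by
    have hbdd : BddAbove S := ⟨δ, fun x hx => (hSδ hx).2⟩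
    calc volume S ≤ volume (Icc 0 s) :=
          measure_mono fun x hx => ⟨(hSδ hx).1, le_csSup hbdd hx⟩
      _ = ENNReal.ofReal s := by simp
  rcases hs0.eq_or_lt with hs | hs
  · have hS0 : volume S = 0 := by simpa [← hs] using hvol
    simp [hS0]
  have hsδ : s ≤ δ := csSup_le ⟨0, hIco ⟨le_rfl, hs⟩⟩ fun x hx => (hSδ hx).2
  calc ENNReal.ofReal q * volume S ≤ ENNReal.ofReal (s * q) := by
        rw [mul_comm s, ENNReal.ofReal_mul hq]; gcongr
    _ ≤ volume (Icc 0 s ∩ X) :=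
        (ENNReal.ofReal_le_ofReal (h s hs hsδ)).trans ENNReal.ofReal_toReal_le
    _ = volume (Ico 0 s ∩ X) := measure_congr (Ico_ae_eq_Icc.inter (ae_eq_refl X)).symm
    _ ≤ volume (S ∩ X) := measure_mono (inter_subset_inter_left X hIco)

lemma MeasureTheory.const_mul_lintegral_ofReal_le_of_meas_lt {α : Type*} [MeasurableSpace α]
    {μ ν : Measure α} {f : α → ℝ} (c : ENNReal) (hμ : 0 ≤ᵐ[μ] f) (hν : 0 ≤ᵐ[ν] f)
    (hfμ : AEMeasurable f μ) (hfν : AEMeasurable f ν)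
    (h : ∀ t : ℝ, c * μ {a | t < f a} ≤ ν {a | t < f a}) :
    c * ∫⁻ a, ENNReal.ofReal (f a) ∂μ ≤ ∫⁻ a, ENNReal.ofReal (f a) ∂ν := by
  rw [lintegral_eq_lintegral_meas_lt μ hμ hfμ, lintegral_eq_lintegral_meas_lt ν hν hfν]
  exact lintegral_const_mul_le _ _ |>.trans (lintegral_mono h)

theorem stmt1 (f : ℝ → ℝ) (hf0 : ∀ x, 0 ≤ x → 0 ≤ f x)
    (hmono : ∀ x y, 0 ≤ x → x ≤ y → f y ≤ f x)
    (X : Set ℝ) (q δ : ℝ) (hq : q ∈ Set.Icc (0 : ℝ) 1)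
    (h : ∀ r : ℝ, 0 < r → r ≤ δ → r * q ≤ (volume (Set.Icc 0 r ∩ X)).toReal) :
    q * ∫ x in Set.Icc 0 δ, f x ≤ ∫ x in X ∩ Set.Icc 0 δ, f x := by
  have hsub : X ∩ Icc 0 δ ⊆ Icc 0 δ := inter_subset_right
  have hint : IntegrableOn f (Icc 0 δ) :=
    AntitoneOn.integrableOn_isCompact isCompact_Icc fun x hx y _ hxy => hmono x y hx.1 hxy
  have hnn : 0 ≤ᵐ[volume.restrict (Icc 0 δ)] f :=
    ae_restrict_of_forall_mem measurableSet_Icc fun x hx => hf0 x hx.1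
  have hnnX := ae_restrict_of_ae_restrict_of_subset hsub hnn
  have hlevel (t : ℝ) : ENNReal.ofReal q * volume.restrict (Icc 0 δ) {a | t < f a} ≤
      volume.restrict (X ∩ Icc 0 δ) {a | t < f a} := by
    rw [Measure.restrict_apply' measurableSet_Icc]
    refine le_trans ?_ (Measure.le_restrict_apply _ _)
    rw [← inter_assoc, inter_right_comm]
    exact ofReal_mul_volume_le_volume_inter_of_Icc_subset hq.1 h inter_subset_right
      fun x ⟨hfx, hx⟩ y hy => ⟨hfx.trans_le (hmono y x hy.1 hy.2), hy.1, hy.2.trans hx.2⟩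
  rw [← ENNReal.ofReal_le_ofReal_iff (setIntegral_nonneg_of_ae_restrict hnnX),
    ENNReal.ofReal_mul hq.1, ofReal_integral_eq_lintegral_ofReal hint hnn,
    ofReal_integral_eq_lintegral_ofReal (hint.mono_set hsub) hnnX]
  exact const_mul_lintegral_ofReal_le_of_meas_lt _ hnn hnnX hint.aemeasurable
    (hint.mono_set hsub).aemeasurable hlevel
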